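/- arXiv:2512.07160 — 2 statements merged into one kernel-verified Lean document; each statement's English description precedes it below -/
import Mathlib

section
/- With X₁ = σ_Z⊗I₂, X₂ = σ_X⊗I₂, X₃ = σ_Y⊗σ_Z, X₄ = σ_Y⊗σ_Y, the 16×16 Hermitian matrix M = X₁⊗X₁ + X₂⊗X₂ − X₃⊗X₃ + X₄⊗X₄ has largest eigenvalue 4, and the eigenspace of M for eigenvalue 4 is one-dimensional, spanned by the maximally entangled vector |φ₄⟩ = (1/2)(|00⟩+|11⟩+|22⟩+|33⟩) ∈ ℂ⁴⊗ℂ⁴. -/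
open Matrix Kronecker

noncomputable def sX : Matrix (Fin 2) (Fin 2) ℂ := !![0, 1; 1, 0]
noncomputable def sY : Matrix (Fin 2) (Fin 2) ℂ := !![0, -Complex.I; Complex.I, 0]
noncomputable def sZ : Matrix (Fin 2) (Fin 2) ℂ := !![1, 0; 0, -1]

noncomputable def Xmat : Fin 4 → Matrix (Fin 2 × Fin 2) (Fin 2 × Fin 2) ℂ
  | 0 => sZ ⊗ₖ (1 : Matrix (Fin 2) (Fin 2) ℂ)
  | 1 => sX ⊗ₖ (1 : Matrix (Fin 2) (Fin 2) ℂ)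
  | 2 => sY ⊗ₖ sZ
  | 3 => sY ⊗ₖ sY

/-- M = X₁⊗X₁ + X₂⊗X₂ − X₃⊗X₃ + X₄⊗X₄. -/
noncomputable def Mmat :
    Matrix ((Fin 2 × Fin 2) × (Fin 2 × Fin 2)) ((Fin 2 × Fin 2) × (Fin 2 × Fin 2)) ℂ :=
  Xmat 0 ⊗ₖ Xmat 0 + Xmat 1 ⊗ₖ Xmat 1 - Xmat 2 ⊗ₖ Xmat 2 + Xmat 3 ⊗ₖ Xmat 3

/-- The maximally entangled state |φ₄⟩, with entry 1/2 at positions |kk⟩. -/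
noncomputable def phi4 : (Fin 2 × Fin 2) × (Fin 2 × Fin 2) → ℂ :=
  fun p => if p.1 = p.2 then (1 / 2 : ℂ) else 0

/-!
`M = ∑ᵢ X̄ᵢ ⊗ Xᵢ` is a sum of four unitaries, so `re ⟨v, M v⟩ ≤ 4 ‖v‖²`, with equality exactly
when `v` is fixed by all four terms. Reading `v ∈ ℂ⁴ ⊗ ℂ⁴` as a `4 × 4` matrix `V` (so `φ₄` becomes `1 / 2`),
the term `X̄ ⊗ X` acts as `V ↦ X V X*`, so the fixed vectors are the `V` commuting with every `Xᵢ`.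
The `Xᵢ` pairwise anticommute and generate all of `M₄(ℂ)`, so these `V` are the scalars.
-/

open RCLike WithLp

section InnerProductSpace
variable {𝕜 E ι : Type*} [RCLike 𝕜] [NormedAddCommGroup E] [InnerProductSpace 𝕜 E] [Fintype ι]

theorem re_le_card_of_sum_eq_smul {x : E} (hx : x ≠ 0) {y : ι → E} (hy : ∀ i, ‖y i‖ = ‖x‖)
    {μ : 𝕜} (h : ∑ i, y i = μ • x) : re μ ≤ Fintype.card ι := by
  have key : re μ * ‖x‖ ^ 2 ≤ Fintype.card ι * ‖x‖ ^ 2 := calc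
    re μ * ‖x‖ ^ 2 = ∑ i, re (inner 𝕜 x (y i)) := by
      rw [← map_sum, ← inner_sum, h, inner_smul_right, inner_self_eq_norm_sq_to_K, ← ofReal_pow,
        re_mul_ofReal]
    _ ≤ ∑ _i : ι, ‖x‖ ^ 2 := Finset.sum_le_sum fun i _ => by
      simpa [hy i, sq] using re_inner_le_norm x (y i)
    _ = Fintype.card ι * ‖x‖ ^ 2 := by simp
  exact le_of_mul_le_mul_right key (by positivity)

theorem sum_eq_card_smul_iff {x : E} {y : ι → E} (hy : ∀ i, ‖y i‖ = ‖x‖) :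
    ∑ i, y i = (Fintype.card ι : 𝕜) • x ↔ ∀ i, y i = x := by
  refine ⟨fun h => ?_, fun h => by simp [h, Nat.cast_smul_eq_nsmul]⟩
  have hsum : ∑ i, ‖y i - x‖ ^ 2 = 0 := calc
    ∑ i, ‖y i - x‖ ^ 2 = ∑ i, (2 * ‖x‖ ^ 2 - 2 * re (inner 𝕜 (y i) x)) := by
      refine Finset.sum_congr rfl fun i _ => ?_
      rw [@norm_sub_sq 𝕜, hy i]
      ring
    _ = 0 := by
      rw [Finset.sum_sub_distrib, ← Finset.mul_sum, ← Finset.mul_sum, ← map_sum, ← sum_inner, h,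
        inner_smul_left, inner_self_eq_norm_sq_to_K]
      simp
  intro i
  have hi := (Finset.sum_eq_zero_iff_of_nonneg fun i _ => sq_nonneg ‖y i - x‖).mp hsum i
    (Finset.mem_univ i)
  simpa [sub_eq_zero] using hi

end InnerProductSpace

namespace Matrix

theorem map_star_kronecker_mulVec_vec {R n : Type*} [NonUnitalCommSemiring R] [Star R]
    [Fintype n] (A V : Matrix n n R) : (A.map star ⊗ₖ A) *ᵥ vec V = vec (A * V * Aᴴ) :=
  kronecker_mulVec_vec _ _ _

variable {𝕜 n ι : Type*} [RCLike 𝕜] [Fintype n] [DecidableEq n] [Fintype ι]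

theorem mul_mul_conjTranspose_eq_self_iff {A : Matrix n n 𝕜} (hA : A ∈ unitaryGroup n 𝕜)
    (V : Matrix n n 𝕜) : A * V * Aᴴ = V ↔ Commute A V := by
  constructor
  · intro h
    calc A * V = A * V * Aᴴ * A := by
          rw [Matrix.mul_assoc _ Aᴴ, ← star_eq_conjTranspose, mem_unitaryGroup_iff'.mp hA,
            Matrix.mul_one]
      _ = V * A := by rw [h]
  · intro h
    rw [h.eq, Matrix.mul_assoc, ← star_eq_conjTranspose, mem_unitaryGroup_iff.mp hA,
      Matrix.mul_one]

theorem norm_toLp_mulVec_of_mem_unitaryGroup {U : Matrix n n 𝕜} (hU : U ∈ unitaryGroup n 𝕜)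
    (v : n → 𝕜) : ‖toLp 2 (U *ᵥ v)‖ = ‖toLp 2 v‖ :=
  (toEuclideanCLM (n := n) (𝕜 := 𝕜) U).norm_map_of_mem_unitary (Unitary.map_mem _ hU) _

theorem re_le_card_of_sum_mulVec_eq_smul {U : ι → Matrix n n 𝕜}
    (hU : ∀ i, U i ∈ unitaryGroup n 𝕜) {v : n → 𝕜} (hv : v ≠ 0) {μ : 𝕜}
    (h : (∑ i, U i) *ᵥ v = μ • v) : re μ ≤ Fintype.card ι := by
  refine re_le_card_of_sum_eq_smul (x := toLp 2 v) (by simpa using hv)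
    (fun i => norm_toLp_mulVec_of_mem_unitaryGroup (hU i) v) ?_
  rw [← toLp_sum, ← sum_mulVec, h, toLp_smul]

theorem sum_mulVec_eq_card_smul_iff {U : ι → Matrix n n 𝕜}
    (hU : ∀ i, U i ∈ unitaryGroup n 𝕜) (v : n → 𝕜) :
    (∑ i, U i) *ᵥ v = (Fintype.card ι : 𝕜) • v ↔ ∀ i, U i *ᵥ v = v := by
  have h := sum_eq_card_smul_iff (𝕜 := 𝕜) (x := toLp 2 v)
    (fun i => norm_toLp_mulVec_of_mem_unitaryGroup (hU i) v)
  simp only [← toLp_sum, ← toLp_smul, (toLp_injective 2).eq_iff] at h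
  rwa [sum_mulVec]

end Matrix

theorem sX_mem_unitaryGroup : sX ∈ unitaryGroup (Fin 2) ℂ := by
  rw [mem_unitaryGroup_iff', star_eq_conjTranspose]
  ext i j
  fin_cases i <;> fin_cases j <;> simp [sX, mul_apply, Fin.sum_univ_two]

theorem sY_mem_unitaryGroup : sY ∈ unitaryGroup (Fin 2) ℂ := by
  rw [mem_unitaryGroup_iff', star_eq_conjTranspose]
  ext i j
  fin_cases i <;> fin_cases j <;> simp [sY, mul_apply, Fin.sum_univ_two]

theorem sZ_mem_unitaryGroup : sZ ∈ unitaryGroup (Fin 2) ℂ := by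
  rw [mem_unitaryGroup_iff', star_eq_conjTranspose]
  ext i j
  fin_cases i <;> fin_cases j <;> simp [sZ, mul_apply, Fin.sum_univ_two]

theorem Xmat_mem_unitaryGroup (i : Fin 4) : Xmat i ∈ unitaryGroup (Fin 2 × Fin 2) ℂ := by
  fin_cases i
  · exact kronecker_mem_unitary sZ_mem_unitaryGroup (one_mem _)
  · exact kronecker_mem_unitary sX_mem_unitaryGroup (one_mem _)
  · exact kronecker_mem_unitary sY_mem_unitaryGroup sZ_mem_unitaryGroup
  · exact kronecker_mem_unitary sY_mem_unitaryGroup sY_mem_unitaryGroup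

theorem commute_Xmat_iff (V : Matrix (Fin 2 × Fin 2) (Fin 2 × Fin 2) ℂ) :
    (∀ i, Commute (Xmat i) V) ↔ ∃ c : ℂ, V = c • 1 := by
  refine ⟨fun h => ⟨V (0, 0) (0, 0), ?_⟩, fun ⟨c, hc⟩ i => hc ▸ (Commute.one_right _).smul_right c⟩
  have h0 := congrFun₂ (h 0).eq
  have h1 := congrFun₂ (h 1).eq
  have h2 := congrFun₂ (h 2).eq
  have h3 := congrFun₂ (h 3).eq
  simp only [Xmat, sX, sY, sZ, Prod.forall, Fin.forall_fin_two, mul_apply, Fintype.sum_prod_type,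
    Fin.sum_univ_two, kroneckerMap_apply, Fin.isValue, of_apply, cons_val', cons_val_zero,
    cons_val_one, cons_val_fin_one, one_apply_eq, one_apply_ne, ne_eq, zero_ne_one, one_ne_zero,
    not_false_eq_true, mul_one, one_mul, mul_zero, zero_mul, add_zero, zero_add, mul_neg, neg_mul,
    neg_zero, neg_neg, neg_inj, Complex.I_mul_I, true_and, and_true, and_self] at h0 h1 h2 h3
  simp only [mul_comm _ Complex.I, ← mul_neg, mul_eq_mul_left_iff, Complex.I_ne_zero,
    or_false] at h2
  ext ⟨a, b⟩ ⟨c, d⟩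
  fin_cases a <;> fin_cases b <;> fin_cases c <;> fin_cases d <;> simp <;> grind

noncomputable def Mterm (i : Fin 4) :
    Matrix ((Fin 2 × Fin 2) × (Fin 2 × Fin 2)) ((Fin 2 × Fin 2) × (Fin 2 × Fin 2)) ℂ :=
  (Xmat i).map star ⊗ₖ Xmat i

theorem Mterm_mem_unitaryGroup (i : Fin 4) :
    Mterm i ∈ unitaryGroup ((Fin 2 × Fin 2) × (Fin 2 × Fin 2)) ℂ :=
  kronecker_mem_unitary (map_star_mem_unitaryGroup_iff.mpr (Xmat_mem_unitaryGroup i))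
    (Xmat_mem_unitaryGroup i)

/-- `X₁, X₂, X₄` are real while `X̄₃ = -X₃`: this is where the minus sign in `M` comes from. -/
theorem Mmat_eq_sum_Mterm : Mmat = ∑ i, Mterm i := by
  have h_two : (Xmat 2).map star = (-1 : ℂ) • Xmat 2 := by
    ext ⟨a, b⟩ ⟨c, d⟩
    fin_cases a <;> fin_cases b <;> fin_cases c <;> fin_cases d <;> simp [Xmat, sY, sZ]
  have h_real : ∀ i, i ≠ 2 → (Xmat i).map star = Xmat i := by
    intro i hi
    ext ⟨a, b⟩ ⟨c, d⟩
    fin_cases i <;> fin_cases a <;> fin_cases b <;> fin_cases c <;> fin_cases d <;>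
      simp_all [Xmat, sX, sY, sZ]
  rw [Fin.sum_univ_four, Mterm, Mterm, Mterm, Mterm, h_two, h_real 0 (by decide),
    h_real 1 (by decide), h_real 3 (by decide), smul_kronecker, neg_one_smul, Mmat, sub_eq_add_neg]

theorem phi4_eq_vec_one :
    phi4 = (1 / 2 : ℂ) • vec (1 : Matrix (Fin 2 × Fin 2) (Fin 2 × Fin 2) ℂ) := by
  ext p
  simp [phi4, vec, one_apply, eq_comm]

theorem forall_Mterm_mulVec_eq_self_iff (v : (Fin 2 × Fin 2) × (Fin 2 × Fin 2) → ℂ) :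
    (∀ i, Mterm i *ᵥ v = v) ↔ ∃ c : ℂ, v = c • phi4 := by
  obtain ⟨V, rfl⟩ := vec_bijective.surjective v
  simp only [Mterm, map_star_kronecker_mulVec_vec, vec_inj,
    mul_mul_conjTranspose_eq_self_iff (Xmat_mem_unitaryGroup _), commute_Xmat_iff,
    phi4_eq_vec_one, smul_smul, ← vec_smul]
  constructor
  · rintro ⟨c, rfl⟩
    exact ⟨2 * c, by rw [mul_one_div, mul_div_cancel_left₀ c two_ne_zero]⟩
  · rintro ⟨c, hc⟩
    exact ⟨c * (1 / 2), hc⟩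

theorem stmt4 :
    (Mmat.mulVec phi4 = (4 : ℂ) • phi4) ∧
    (∀ v : (Fin 2 × Fin 2) × (Fin 2 × Fin 2) → ℂ,
      Mmat.mulVec v = (4 : ℂ) • v ↔ ∃ c : ℂ, v = c • phi4) ∧
    (∀ μ : ℂ, (∃ v, v ≠ 0 ∧ Mmat.mulVec v = μ • v) → μ.re ≤ 4) := by
  have h_fixed (v) : Mmat *ᵥ v = (4 : ℂ) • v ↔ ∃ c : ℂ, v = c • phi4 := by
    simpa [Mmat_eq_sum_Mterm] using (sum_mulVec_eq_card_smul_iff Mterm_mem_unitaryGroup v).trans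
      (forall_Mterm_mulVec_eq_self_iff v)
  refine ⟨(h_fixed phi4).mpr ⟨1, (one_smul ℂ phi4).symm⟩, h_fixed, ?_⟩
  rintro μ ⟨v, hv, h⟩
  rw [Mmat_eq_sum_Mterm] at h
  simpa using re_le_card_of_sum_mulVec_eq_smul Mterm_mem_unitaryGroup hv h
end

section
/- If F is a complex projection matrix (F* = F and F² = F) and also its real part re(F) = (F+F̄)/2 is a projection, then F = F̄, i.e. F is a real matrix. -/
open Matrix

theorem stmt11 {d : ℕ} (F : Matrix (Fin d) (Fin d) ℂ)
    (hherm : Fᴴ = F) (hidem : F * F = F)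
    (hre : ((2⁻¹ : ℂ) • (F + F.map (starRingEnd ℂ))) *
            ((2⁻¹ : ℂ) • (F + F.map (starRingEnd ℂ))) =
          (2⁻¹ : ℂ) • (F + F.map (starRingEnd ℂ))) :
    F = F.map (starRingEnd ℂ) := by
  set G := F.map (starRingEnd ℂ) with hG
  have hGherm : Gᴴ = G := by
    ext i j
    have := congrFun (congrFun hherm j) i
    simp only [conjTranspose_apply] at this ⊢
    simp only [hG, Matrix.map_apply]
    rw [← this]
    simp
  have hGidem : G * G = G := by
    rw [hG, ← Matrix.map_mul, hidem]
  have h2 : (F + G) * (F + G) = (2 : ℂ) • (F + G) := by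
    have h := hre
    rw [Matrix.smul_mul, Matrix.mul_smul, smul_smul] at h
    calc (F + G) * (F + G)
        = (4 : ℂ) • ((2⁻¹ * 2⁻¹ : ℂ) • ((F + G) * (F + G))) := by
          rw [smul_smul]; norm_num
      _ = (4 : ℂ) • ((2⁻¹ : ℂ) • (F + G)) := by rw [h]
      _ = (2 : ℂ) • (F + G) := by rw [smul_smul]; norm_num
  have hkey : F * G + G * F = F + G := by
    have e : F * G + G * F = (F + G) * (F + G) - F * F - G * G := by noncomm_ring
    rw [e, h2, hidem, hGidem, two_smul]
    abel
  have e : F * G + F * G * F = F + F * G := by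
    have h := congrArg (fun M => F * M) hkey
    simpa [mul_add, ← mul_assoc, hidem] using h
  have hFGF : F * G * F = F := by
    rw [add_comm F (F * G)] at e
    exact add_left_cancel e
  have h5 : F * G * G * F = F := by rw [mul_assoc F G G, hGidem, hFGF]
  have hA : (F - F * G) * (F - F * G)ᴴ = 0 := by
    rw [conjTranspose_sub, conjTranspose_mul, hherm, hGherm]
    calc (F - F * G) * (F - G * F)
        = F * F - F * G * F - F * G * F + F * G * G * F := by noncomm_ring
      _ = 0 := by rw [hidem, hFGF, h5]; abel
  have hFG : F * G = F := by
    open ComplexOrder in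
    have := Matrix.self_mul_conjTranspose_eq_zero.mp hA
    have h0 : F - F * G = 0 := this
    linear_combination (norm := abel) -h0
  have hGF : G * F = F := by
    have := congrArg conjTranspose hFG
    rwa [conjTranspose_mul, hherm, hGherm] at this
  have : F + F = F + G := by rw [← hkey, hFG, hGF]
  have := add_left_cancel this
  rw [← this]
end
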